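/- arXiv:1710.09989 — 2 statements merged into one kernel-verified Lean document; each statement's English description precedes it below -/
import Mathlib

section
/- Let n ≥ 1, let μ be a (Borel) measure on ℝ^{n+1}, let x ∈ ℝ^{n+1}, and let θ ≥ 0. Suppose that μ(B(x, s)) ≤ θ · ω_n · s^n for every s > 0, where B(x, s) is the closed ball of radius s centered at x and ω_n is the Lebesgue measure of the unit ball in ℝ^n. Then for every r > 0, ∫_{ℝ^{n+1}} (4πr²)^{−n/2} · e^{−‖y − x‖²/(4r²)} dμ(y) ≤ θ. -/
/-!
By the layer-cake formula the Gaussian density ratio is the integral over `t > 0` of the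
`μ`-measure of the superlevel sets of the Gaussian weight, which are balls around `x`. The
area-ratio bound makes each of these measures at most `θ` times the Lebesgue measure of the ball
of the same radius in `ℝ^n`, and the same layer-cake integral for Lebesgue measure on `ℝ^n` is
the total Gaussian integral, `1`.
-/

open MeasureTheory Metric Real

/-- The `n`-dimensional Gaussian density ratio is
`Θ(μ, x, r) = ∫ gaussianWeight n r ‖y - x‖ dμ(y)`. -/
noncomputable def gaussianWeight (n : ℕ) (r d : ℝ) : ℝ :=
  (4 * π * r ^ 2) ^ (-(n : ℝ) / 2) * exp (-d ^ 2 / (4 * r ^ 2))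

lemma gaussianWeight_nonneg (n : ℕ) (r d : ℝ) : 0 ≤ gaussianWeight n r d := by
  unfold gaussianWeight; positivity

lemma continuous_gaussianWeight (n : ℕ) (r : ℝ) : Continuous (gaussianWeight n r) := by
  unfold gaussianWeight; fun_prop

lemma lt_gaussianWeight_iff {n : ℕ} {r : ℝ} (hr : 0 < r) {t : ℝ} (ht : 0 < t) {d : ℝ}
    (hd : 0 ≤ d) :
    t < gaussianWeight n r d ↔
      d < √(4 * r ^ 2 * log ((4 * π * r ^ 2) ^ (-(n : ℝ) / 2) / t)) := by
  set c := (4 * π * r ^ 2) ^ (-(n : ℝ) / 2)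
  have hc : 0 < c := by positivity
  have h4r : (0 : ℝ) < 4 * r ^ 2 := by positivity
  rw [gaussianWeight, lt_sqrt hd, mul_comm (4 * r ^ 2), ← div_lt_iff₀ h4r, mul_comm c,
    ← div_lt_iff₀ hc, ← log_lt_iff_lt_exp (by positivity), ← inv_div, log_inv,
    neg_div, neg_lt_neg_iff]

lemma lintegral_gaussianWeight_norm_eq_one {V : Type*} [NormedAddCommGroup V]
    [InnerProductSpace ℝ V] [FiniteDimensional ℝ V] [MeasurableSpace V] [BorelSpace V]
    {r : ℝ} (hr : 0 < r) :
    ∫⁻ v : V, ENNReal.ofReal (gaussianWeight (Module.finrank ℝ V) r ‖v‖) = 1 := by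
  have hb : 0 < 1 / (4 * r ^ 2) := by positivity
  have hweight : ∀ v : V, gaussianWeight (Module.finrank ℝ V) r ‖v‖ =
      (4 * π * r ^ 2) ^ (-(Module.finrank ℝ V : ℝ) / 2) *
        exp (-(1 / (4 * r ^ 2)) * ‖v‖ ^ 2) := by
    intro v; rw [gaussianWeight]; ring_nf
  have hintegral : ∫ v : V, gaussianWeight (Module.finrank ℝ V) r ‖v‖ = 1 := by
    simp_rw [hweight]
    rw [integral_const_mul, GaussianFourier.integral_rexp_neg_mul_sq_norm hb, div_div_eq_mul_div,
      div_one, show π * (4 * r ^ 2) = 4 * π * r ^ 2 by ring, ← rpow_add (by positivity),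
      neg_div, neg_add_cancel, rpow_zero]
  rw [← ofReal_integral_eq_lintegral_ofReal, hintegral, ENNReal.ofReal_one]
  · exact Integrable.of_integral_ne_zero (by rw [hintegral]; exact one_ne_zero)
  · exact Filter.Eventually.of_forall fun v => gaussianWeight_nonneg _ _ _

lemma setOf_lt_comp_norm_sub_eq_ball {E : Type*} [SeminormedAddCommGroup E] {g : ℝ → ℝ}
    {t s : ℝ} (hs : ∀ d ≥ 0, t < g d ↔ d < s) (x : E) :
    {y | t < g ‖y - x‖} = ball x s := by
  ext y
  rw [Set.mem_ofPred_eq, mem_ball_iff_norm]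
  exact hs _ (norm_nonneg _)

theorem lintegral_comp_norm_sub_le_of_measure_closedBall_le {E F : Type*}
    [SeminormedAddCommGroup E] [MeasurableSpace E] [OpensMeasurableSpace E]
    [SeminormedAddCommGroup F] [MeasurableSpace F] [OpensMeasurableSpace F]
    {μ : Measure E} {ν : Measure F} {x : E} {z : F} {C : ENNReal} {g : ℝ → ℝ}
    (hg_nonneg : ∀ d, 0 ≤ g d) (hg_cont : Continuous g)
    (hg_level : ∀ t > 0, ∃ s, ∀ d ≥ 0, t < g d ↔ d < s)
    (hμν : ∀ s > 0, μ (closedBall x s) ≤ C * ν (ball z s)) :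
    ∫⁻ y, ENNReal.ofReal (g ‖y - x‖) ∂μ ≤
      C * ∫⁻ w, ENNReal.ofReal (g ‖w - z‖) ∂ν := by
  have hlevel : ∀ t ∈ Set.Ioi (0 : ℝ),
      μ {y | t < g ‖y - x‖} ≤ C * ν {w | t < g ‖w - z‖} := by
    intro t ht
    obtain ⟨s, hs⟩ := hg_level t ht
    rw [setOf_lt_comp_norm_sub_eq_ball hs, setOf_lt_comp_norm_sub_eq_ball hs]
    rcases le_or_gt s 0 with hs₀ | hs₀
    · simp [ball_eq_empty.2 hs₀]
    · exact (measure_mono ball_subset_closedBall).trans (hμν s hs₀)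
  have hν_antitone : Antitone fun t => ν {w | t < g ‖w - z‖} :=
    fun _ _ h => measure_mono fun _ hw => h.trans_lt hw
  rw [lintegral_eq_lintegral_meas_lt μ (.of_forall fun _ => hg_nonneg _)
      (by fun_prop : Continuous fun y => g ‖y - x‖).aemeasurable,
    lintegral_eq_lintegral_meas_lt ν (.of_forall fun _ => hg_nonneg _)
      (by fun_prop : Continuous fun w => g ‖w - z‖).aemeasurable,
    ← lintegral_const_mul _ hν_antitone.measurable]
  exact setLIntegral_mono' measurableSet_Ioi hlevel

lemma ofReal_mul_addHaar_ball_of_pos {E : Type*} [NormedAddCommGroup E] [NormedSpace ℝ E]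
    [MeasurableSpace E] [BorelSpace E] [FiniteDimensional ℝ E] (μ : Measure E)
    [μ.IsAddHaarMeasure] (x : E) (θ : ℝ) {s : ℝ} (hs : 0 < s) :
    ENNReal.ofReal θ * μ (ball x s) =
      ENNReal.ofReal (θ * (μ (closedBall 0 1)).toReal * s ^ Module.finrank ℝ E) := by
  rw [Measure.addHaar_ball_of_pos μ x hs, ← Measure.addHaar_unitClosedBall_eq_addHaar_unitBall,
    mul_assoc, ENNReal.ofReal_mul' (by positivity), ENNReal.ofReal_mul' (by positivity),
    ENNReal.ofReal_toReal measure_closedBall_lt_top.ne, mul_comm (μ _)]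

theorem stmt_3_general (n : ℕ) (μ : Measure (EuclideanSpace ℝ (Fin (n + 1))))
    (x : EuclideanSpace ℝ (Fin (n + 1))) (θ : ℝ)
    (hratio : ∀ s > 0, μ (closedBall x s)
      ≤ ENNReal.ofReal (θ * (volume (closedBall (0 : EuclideanSpace ℝ (Fin n)) 1)).toReal
          * s ^ n))
    (r : ℝ) (hr : 0 < r) :
    ∫⁻ y, ENNReal.ofReal ((4 * Real.pi * r ^ 2) ^ (-(n : ℝ) / 2)
        * Real.exp (-‖y - x‖ ^ 2 / (4 * r ^ 2))) ∂μ ≤ ENNReal.ofReal θ := by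
  have hball : ∀ s > 0, μ (closedBall x s) ≤
      ENNReal.ofReal θ * volume (ball (0 : EuclideanSpace ℝ (Fin n)) s) := by
    intro s hs
    rw [ofReal_mul_addHaar_ball_of_pos volume 0 θ hs, finrank_euclideanSpace_fin]
    exact hratio s hs
  have hgauss := lintegral_gaussianWeight_norm_eq_one (V := EuclideanSpace ℝ (Fin n)) hr
  rw [finrank_euclideanSpace_fin] at hgauss
  calc ∫⁻ y, ENNReal.ofReal (gaussianWeight n r ‖y - x‖) ∂μ
      ≤ ENNReal.ofReal θ *
          ∫⁻ w : EuclideanSpace ℝ (Fin n), ENNReal.ofReal (gaussianWeight n r ‖w - 0‖) :=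
        lintegral_comp_norm_sub_le_of_measure_closedBall_le (gaussianWeight_nonneg n r)
          (continuous_gaussianWeight n r)
          (fun _ ht => ⟨_, fun _ hd => lt_gaussianWeight_iff hr ht hd⟩) hball
    _ = ENNReal.ofReal θ := by simp_rw [sub_zero, hgauss, mul_one]

/-- Area ratios bound Gaussian density ratios: if `μ(B(x,s)) ≤ θ · ω_n · s^n` for all `s > 0`,
where `ω_n` is the Lebesgue measure of the unit ball in `ℝ^n`, then every Gaussian density
ratio of `μ` at `x` is at most `θ`. -/
theorem stmt_3 (n : ℕ) (hn : 1 ≤ n) (μ : Measure (EuclideanSpace ℝ (Fin (n + 1))))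
    (x : EuclideanSpace ℝ (Fin (n + 1))) (θ : ℝ) (hθ : 0 ≤ θ)
    (hratio : ∀ s > 0, μ (closedBall x s)
      ≤ ENNReal.ofReal (θ * (volume (closedBall (0 : EuclideanSpace ℝ (Fin n)) 1)).toReal
          * s ^ n))
    (r : ℝ) (hr : 0 < r) :
    ∫⁻ y, ENNReal.ofReal ((4 * Real.pi * r ^ 2) ^ (-(n : ℝ) / 2)
        * Real.exp (-‖y - x‖ ^ 2 / (4 * r ^ 2))) ∂μ ≤ ENNReal.ofReal θ :=
  stmt_3_general n μ x θ hratio r hr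
end

section
/- Let n ≥ 1, let μ be a (Borel) measure on ℝ^{n+1}, let x ∈ ℝ^{n+1}, and let δ > 0, r₀ > 0. Suppose (i) μ(B(x, s)) ≤ (1 + δ) · ω_n · s^n for every s with 0 < s ≤ r₀, where ω_n is the Lebesgue measure of the unit ball in ℝ^n, and (ii) there exist C > 0 and d ≥ 0 with μ(B(x, ρ)) ≤ C·(1 + ρ)^d for every ρ > 0. Then for every δ′ > 0 there exists r₁ ∈ (0, r₀) such that for all r with 0 < r ≤ r₁, ∫_{ℝ^{n+1}} (4πr²)^{−n/2} · e^{−‖y − x‖²/(4r²)} dμ(y) ≤ 1 + δ + δ′. -/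
open MeasureTheory Metric Real Set

lemma gauss_ball_eq {E : Type*} [NormedAddCommGroup E] (x : E) {c t r : ℝ} (hr : 0 < r)
    (ht : 0 < t) (htc : t < c) :
    {a : E | t < c * Real.exp (-‖a - x‖ ^ 2 / (4 * r ^ 2))}
      = ball x (Real.sqrt (4 * r ^ 2 * Real.log (c / t))) := by
  have hc : 0 < c := ht.trans htc
  have h4 : (0:ℝ) < 4 * r ^ 2 := by positivity
  ext a
  simp only [Set.mem_setOf_eq, mem_ball, dist_eq_norm]
  rw [mul_comm c, ← div_lt_iff₀ hc, ← Real.log_lt_iff_lt_exp (by positivity),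
    Real.log_div ht.ne' hc.ne', ← neg_sub (Real.log c), neg_div, neg_lt_neg_iff,
    div_lt_iff₀ h4, ← Real.log_div hc.ne' ht.ne', ← Real.lt_sqrt (norm_nonneg _)]
  rw [mul_comm]

lemma gauss_set_empty {E : Type*} [NormedAddCommGroup E] (x : E) {c t r : ℝ}
    (hc : 0 < c) (htc : c ≤ t) :
    {a : E | t < c * Real.exp (-‖a - x‖ ^ 2 / (4 * r ^ 2))} = (∅ : Set E) := by
  rw [Set.eq_empty_iff_forall_notMem]
  intro a
  simp only [Set.mem_setOf_eq, not_lt]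
  calc c * Real.exp (-‖a - x‖ ^ 2 / (4 * r ^ 2)) ≤ c * 1 := by
        gcongr
        exact Real.exp_le_one_iff.2 (div_nonpos_of_nonpos_of_nonneg (neg_nonpos.2 (by positivity)) (by positivity))
    _ ≤ t := by linarith

lemma gauss_integrable (m : ℕ) {b : ℝ} (hb : 0 < b) :
    Integrable (fun z : EuclideanSpace ℝ (Fin m) => Real.exp (-b * ‖z‖ ^ 2)) := by
  have h := (GaussianFourier.integrable_cexp_neg_mul_sq_norm_add (V := EuclideanSpace ℝ (Fin m))
    (b := (b : ℂ)) (by simpa using hb) 0 0).re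
  refine h.congr (Filter.Eventually.of_forall fun z => ?_)
  have : (-(b:ℂ) * (‖z‖:ℂ) ^ 2 + 0 * ((inner ℝ (0 : EuclideanSpace ℝ (Fin m)) z : ℝ) : ℂ))
      = ((-b * ‖z‖ ^ 2 : ℝ) : ℂ) := by push_cast; ring
  simp only [this, ← Complex.ofReal_exp]
  exact Complex.ofReal_re _

lemma gauss_lintegral (m : ℕ) {r : ℝ} (hr : 0 < r) :
    ∫⁻ z : EuclideanSpace ℝ (Fin m), ENNReal.ofReal ((4 * Real.pi * r ^ 2) ^ (-(m:ℝ)/2)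
      * Real.exp (-‖z‖ ^ 2 / (4 * r ^ 2))) = 1 := by
  have hb : (0:ℝ) < 1 / (4 * r ^ 2) := by positivity
  have h4 : (0:ℝ) < 4 * Real.pi * r ^ 2 := by positivity
  have hint : Integrable (fun z : EuclideanSpace ℝ (Fin m) =>
      (4 * Real.pi * r ^ 2) ^ (-(m:ℝ)/2) * Real.exp (-(1/(4*r^2)) * ‖z‖ ^ 2)) :=
    (gauss_integrable m hb).const_mul _
  have heq : ∀ z : EuclideanSpace ℝ (Fin m),
      (4 * Real.pi * r ^ 2) ^ (-(m:ℝ)/2) * Real.exp (-‖z‖ ^ 2 / (4 * r ^ 2))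
        = (4 * Real.pi * r ^ 2) ^ (-(m:ℝ)/2) * Real.exp (-(1/(4*r^2)) * ‖z‖ ^ 2) := by
    intro z; ring_nf
  simp_rw [heq]
  rw [← MeasureTheory.ofReal_integral_eq_lintegral_ofReal hint
    (Filter.Eventually.of_forall fun z => by positivity)]
  rw [integral_const_mul, GaussianFourier.integral_rexp_neg_mul_sq_norm hb]
  rw [finrank_euclideanSpace_fin]
  have : Real.pi / (1 / (4 * r ^ 2)) = 4 * Real.pi * r ^ 2 := by
    field_simp
  rw [this, ← Real.rpow_add h4]
  rw [show -(m:ℝ)/2 + (m:ℝ)/2 = 0 by ring, Real.rpow_zero, ENNReal.ofReal_one]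

lemma inside_bound (n : ℕ) (μ : Measure (EuclideanSpace ℝ (Fin (n + 1))))
    (x : EuclideanSpace ℝ (Fin (n + 1))) (δ r₀ : ℝ) (hδ : 0 < δ) (hr₀ : 0 < r₀)
    (hratio : ∀ s : ℝ, 0 < s → s ≤ r₀ → μ (closedBall x s)
      ≤ ENNReal.ofReal ((1 + δ)
          * (volume (closedBall (0 : EuclideanSpace ℝ (Fin n)) 1)).toReal * s ^ n))
    {r : ℝ} (hr : 0 < r) :
    ∫⁻ y in closedBall x r₀, ENNReal.ofReal ((4 * Real.pi * r ^ 2) ^ (-(n : ℝ) / 2)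
          * Real.exp (-‖y - x‖ ^ 2 / (4 * r ^ 2))) ∂μ ≤ ENNReal.ofReal (1 + δ) := by
  set c : ℝ := (4 * Real.pi * r ^ 2) ^ (-(n : ℝ) / 2) with hc_def
  have hc : 0 < c := Real.rpow_pos_of_pos (by positivity) _
  set ω : ℝ := (volume (closedBall (0 : EuclideanSpace ℝ (Fin n)) 1)).toReal with hω_def
  have hωnn : (0:ℝ) ≤ ω := ENNReal.toReal_nonneg
  have hωeq : ENNReal.ofReal ω = volume (closedBall (0 : EuclideanSpace ℝ (Fin n)) 1) :=
    ENNReal.ofReal_toReal measure_closedBall_lt_top.ne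
  have fmble : Measurable (fun y : EuclideanSpace ℝ (Fin (n + 1)) =>
      c * Real.exp (-‖y - x‖ ^ 2 / (4 * r ^ 2))) := by fun_prop
  have gmble : Measurable (fun z : EuclideanSpace ℝ (Fin n) =>
      c * Real.exp (-‖z‖ ^ 2 / (4 * r ^ 2))) := by fun_prop
  have lcμ := lintegral_eq_lintegral_meas_lt (μ.restrict (closedBall x r₀))
    (Filter.Eventually.of_forall fun a => by positivity) fmble.aemeasurable
  have lcv := lintegral_eq_lintegral_meas_lt (volume : Measure (EuclideanSpace ℝ (Fin n)))
    (Filter.Eventually.of_forall fun a => by positivity) gmble.aemeasurable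
  have key : ∀ t ∈ Set.Ioi (0:ℝ),
      (μ.restrict (closedBall x r₀)) {a | t < c * Real.exp (-‖a - x‖ ^ 2 / (4 * r ^ 2))}
        ≤ ENNReal.ofReal (1 + δ)
          * volume {z : EuclideanSpace ℝ (Fin n) | t < c * Real.exp (-‖z‖ ^ 2 / (4 * r ^ 2))} := by
    intro t ht
    rw [Set.mem_Ioi] at ht
    rcases le_or_gt c t with hct | htc
    · rw [gauss_set_empty x hc hct]
      simp
    · set s : ℝ := Real.sqrt (4 * r ^ 2 * Real.log (c / t)) with hs_def
      have hlog : 0 < Real.log (c / t) := Real.log_pos ((one_lt_div ht).2 htc)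
      have hs : 0 < s := Real.sqrt_pos.2 (by positivity)
      have hF : {z : EuclideanSpace ℝ (Fin n) | t < c * Real.exp (-‖z‖ ^ 2 / (4 * r ^ 2))}
          = ball (0 : EuclideanSpace ℝ (Fin n)) s := by
        have h := gauss_ball_eq (0 : EuclideanSpace ℝ (Fin n)) hr ht htc
        simpa using h
      have hvol : volume (ball (0 : EuclideanSpace ℝ (Fin n)) s)
          = ENNReal.ofReal (s ^ n) * ENNReal.ofReal ω := by
        rw [show ball (0 : EuclideanSpace ℝ (Fin n)) s = ball 0 (s * 1) by rw [mul_one]]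
        rw [Measure.addHaar_ball_mul_of_pos volume (0 : EuclideanSpace ℝ (Fin n)) hs 1]
        rw [← Measure.addHaar_unitClosedBall_eq_addHaar_unitBall, ← hωeq,
          finrank_euclideanSpace_fin]
      rw [gauss_ball_eq x hr ht htc, hF, ← hs_def, hvol]
      calc (μ.restrict (closedBall x r₀)) (ball x s)
          = μ (ball x s ∩ closedBall x r₀) := Measure.restrict_apply' measurableSet_closedBall
        _ ≤ μ (closedBall x (min s r₀)) := by
            apply measure_mono
            intro a ha
            exact mem_closedBall.2 (le_min (mem_ball.1 ha.1).le (mem_closedBall.1 ha.2))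
        _ ≤ ENNReal.ofReal ((1 + δ) * ω * (min s r₀) ^ n) :=
            hratio _ (lt_min hs hr₀) (min_le_right _ _)
        _ ≤ ENNReal.ofReal ((1 + δ) * ω * s ^ n) := by
            apply ENNReal.ofReal_le_ofReal
            exact mul_le_mul_of_nonneg_left
              (pow_le_pow_left₀ (le_min hs.le hr₀.le) (min_le_left _ _) n) (by positivity)
        _ = ENNReal.ofReal (1 + δ) * (ENNReal.ofReal (s ^ n) * ENNReal.ofReal ω) := by
            rw [← ENNReal.ofReal_mul (by positivity), ← ENNReal.ofReal_mul (by positivity)]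
            ring_nf
  calc ∫⁻ y in closedBall x r₀,
        ENNReal.ofReal (c * Real.exp (-‖y - x‖ ^ 2 / (4 * r ^ 2))) ∂μ
      = ∫⁻ t in Set.Ioi (0:ℝ),
          (μ.restrict (closedBall x r₀)) {a | t < c * Real.exp (-‖a - x‖ ^ 2 / (4 * r ^ 2))} :=
        lcμ
    _ ≤ ∫⁻ t in Set.Ioi (0:ℝ), ENNReal.ofReal (1 + δ)
          * volume {z : EuclideanSpace ℝ (Fin n) | t < c * Real.exp (-‖z‖ ^ 2 / (4 * r ^ 2))} :=
        setLIntegral_mono' measurableSet_Ioi key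
    _ = ENNReal.ofReal (1 + δ) * ∫⁻ t in Set.Ioi (0:ℝ),
          volume {z : EuclideanSpace ℝ (Fin n) | t < c * Real.exp (-‖z‖ ^ 2 / (4 * r ^ 2))} :=
        lintegral_const_mul' _ _ ENNReal.ofReal_ne_top
    _ = ENNReal.ofReal (1 + δ) * ∫⁻ z : EuclideanSpace ℝ (Fin n),
          ENNReal.ofReal (c * Real.exp (-‖z‖ ^ 2 / (4 * r ^ 2))) := by rw [← lcv]
    _ = ENNReal.ofReal (1 + δ) := by rw [hc_def, gauss_lintegral n hr, mul_one]

lemma poly_geom_summable (m : ℕ) {q : ℝ} (hq0 : 0 < q) (hq1 : q < 1) :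
    Summable (fun k : ℕ => ((k:ℝ)+2)^m * q^k) := by
  have base : ∀ j : ℕ, Summable (fun k : ℕ => (k:ℝ)^j * q^k) := fun j =>
    summable_pow_mul_geometric_of_norm_lt_one j
      (by rw [Real.norm_eq_abs, abs_of_pos hq0]; exact hq1)
  have hsum : Summable (fun k : ℕ => ∑ j ∈ Finset.range (m+1),
      ((m.choose j : ℝ) * 2^(m-j)) * ((k:ℝ)^j * q^k)) :=
    summable_sum fun j _ => ((base j).mul_left _)
  refine hsum.congr fun k => ?_
  rw [add_pow, Finset.sum_mul]
  exact Finset.sum_congr rfl fun j _ => by ring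

lemma growth_lintegral_lt_top (n : ℕ) (μ : Measure (EuclideanSpace ℝ (Fin (n+1))))
    (x : EuclideanSpace ℝ (Fin (n+1))) {C d b : ℝ}
    (hC : 0 < C) (hd : 0 ≤ d) (hb : 0 < b)
    (hgrowth : ∀ ρ > 0, μ (closedBall x ρ) ≤ ENNReal.ofReal (C * (1+ρ)^d)) :
    ∫⁻ y, ENNReal.ofReal (Real.exp (-‖y - x‖^2 / b)) ∂μ ≠ ⊤ := by
  set A : ℕ → Set (EuclideanSpace ℝ (Fin (n+1))) :=
    fun k => closedBall x ((k:ℝ)+1) \ ball x (k:ℝ) with hA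
  have hcover : (Set.univ : Set (EuclideanSpace ℝ (Fin (n+1)))) ⊆ ⋃ k : ℕ, A k := by
    intro y _
    refine Set.mem_iUnion.2 ⟨⌊dist y x⌋₊, ?_, ?_⟩
    · exact mem_closedBall.2 (by have := Nat.lt_floor_add_one (dist y x); linarith)
    · simp only [mem_ball, not_lt]
      exact Nat.floor_le dist_nonneg
  have hmeas : ∀ k : ℕ, MeasurableSet (A k) :=
    fun k => measurableSet_closedBall.diff measurableSet_ball
  have hbound : ∀ k : ℕ, ∫⁻ y in A k, ENNReal.ofReal (Real.exp (-‖y - x‖^2 / b)) ∂μ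
      ≤ ENNReal.ofReal (Real.exp (-(k:ℝ)^2 / b) * (C * (2+(k:ℝ))^d)) := by
    intro k
    calc ∫⁻ y in A k, ENNReal.ofReal (Real.exp (-‖y - x‖^2 / b)) ∂μ
        ≤ ∫⁻ _ in A k, ENNReal.ofReal (Real.exp (-(k:ℝ)^2 / b)) ∂μ := by
          refine setLIntegral_mono' (hmeas k) fun y hy => ?_
          apply ENNReal.ofReal_le_ofReal
          apply Real.exp_le_exp.2
          have hk : (k:ℝ) ≤ ‖y - x‖ := by
            have := hy.2
            simp only [mem_ball, not_lt] at this
            rwa [dist_eq_norm] at this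
          have hk2 : (k:ℝ)^2 ≤ ‖y - x‖^2 := by
            apply pow_le_pow_left₀ (Nat.cast_nonneg k) hk
          rw [neg_div, neg_div, neg_le_neg_iff]
          gcongr
      _ = ENNReal.ofReal (Real.exp (-(k:ℝ)^2 / b)) * μ (A k) := setLIntegral_const _ _
      _ ≤ ENNReal.ofReal (Real.exp (-(k:ℝ)^2 / b)) * ENNReal.ofReal (C * (2+(k:ℝ))^d) := by
          apply mul_le_mul_right
          calc μ (A k) ≤ μ (closedBall x ((k:ℝ)+1)) := measure_mono Set.diff_subset
            _ ≤ ENNReal.ofReal (C * (1 + ((k:ℝ)+1))^d) := hgrowth _ (by positivity)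
            _ = ENNReal.ofReal (C * (2+(k:ℝ))^d) := by
                rw [show (1 + ((k:ℝ)+1)) = 2 + (k:ℝ) by ring]
      _ = ENNReal.ofReal (Real.exp (-(k:ℝ)^2 / b) * (C * (2+(k:ℝ))^d)) := by
          rw [← ENNReal.ofReal_mul (by positivity)]
  set m : ℕ := ⌈d⌉₊ with hm
  set q : ℝ := Real.exp (-(1/b)) with hq
  have hq0 : 0 < q := Real.exp_pos _
  have hq1 : q < 1 := Real.exp_lt_one_iff.2 (neg_lt_zero.2 (by positivity))
  have hsum : Summable (fun k : ℕ => Real.exp (-(k:ℝ)^2 / b) * (C * (2+(k:ℝ))^d)) := by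
    have hle : ∀ k : ℕ, Real.exp (-(k:ℝ)^2 / b) * (C * (2+(k:ℝ))^d)
        ≤ C * (((k:ℝ)+2)^m * q^k) := by
      intro k
      have h1 : Real.exp (-(k:ℝ)^2 / b) ≤ q^k := by
        rw [hq, ← Real.exp_nat_mul]
        apply Real.exp_le_exp.2
        have hkk : (k:ℝ) ≤ (k:ℝ)^2 := by
          rcases Nat.eq_zero_or_pos k with h | h
          · simp [h]
          · have h1 : (1:ℝ) ≤ (k:ℝ) := by exact_mod_cast h
            nlinarith
        have : (k:ℝ) * -(1/b) = -((k:ℝ)/b) := by ring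
        rw [this, neg_div, neg_le_neg_iff]
        gcongr
      have h2 : (2+(k:ℝ))^d ≤ ((k:ℝ)+2)^m := by
        rw [← Real.rpow_natCast ((k:ℝ)+2) m, show (2+(k:ℝ)) = ((k:ℝ)+2) by ring]
        refine Real.rpow_le_rpow_of_exponent_le ?_ (Nat.le_ceil d)
        have := Nat.cast_nonneg (α := ℝ) k
        linarith
      calc Real.exp (-(k:ℝ)^2 / b) * (C * (2+(k:ℝ))^d)
          ≤ q^k * (C * ((k:ℝ)+2)^m) :=
            mul_le_mul h1 (mul_le_mul_of_nonneg_left h2 hC.le) (by positivity) (by positivity)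
        _ = C * (((k:ℝ)+2)^m * q^k) := by ring
    exact Summable.of_nonneg_of_le (fun k => by positivity) hle
      ((poly_geom_summable m hq0 hq1).mul_left C)
  have hfin : ∫⁻ y, ENNReal.ofReal (Real.exp (-‖y - x‖^2 / b)) ∂μ
      ≤ ENNReal.ofReal (∑' k : ℕ, Real.exp (-(k:ℝ)^2 / b) * (C * (2+(k:ℝ))^d)) := by
    calc ∫⁻ y, ENNReal.ofReal (Real.exp (-‖y - x‖^2 / b)) ∂μ
        = ∫⁻ y in Set.univ, ENNReal.ofReal (Real.exp (-‖y - x‖^2 / b)) ∂μ :=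
          (setLIntegral_univ _).symm
      _ ≤ ∫⁻ y in ⋃ k : ℕ, A k, ENNReal.ofReal (Real.exp (-‖y - x‖^2 / b)) ∂μ :=
          lintegral_mono_set hcover
      _ ≤ ∑' k : ℕ, ∫⁻ y in A k, ENNReal.ofReal (Real.exp (-‖y - x‖^2 / b)) ∂μ :=
          lintegral_iUnion_le _ _
      _ ≤ ∑' k : ℕ, ENNReal.ofReal (Real.exp (-(k:ℝ)^2 / b) * (C * (2+(k:ℝ))^d)) :=
          ENNReal.tsum_le_tsum hbound
      _ = ENNReal.ofReal (∑' k : ℕ, Real.exp (-(k:ℝ)^2 / b) * (C * (2+(k:ℝ))^d)) :=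
          (ENNReal.ofReal_tsum_of_nonneg (fun k => by positivity) hsum).symm
  exact ne_top_of_le_ne_top ENNReal.ofReal_ne_top hfin

/-- Area ratio control at a fixed scale `r₀` together with polynomial volume growth controls
the Gaussian density ratio at all sufficiently small scales: for every `δ' > 0` there is
`r₁ ∈ (0, r₀)` such that for all `0 < r ≤ r₁` the Gaussian density ratio of `μ` at `x` and
scale `r` is at most `1 + δ + δ'`. Here `ω_n` is the Lebesgue measure of the unit ball in `ℝ^n`. -/
theorem stmt_4 (n : ℕ) (hn : 1 ≤ n) (μ : Measure (EuclideanSpace ℝ (Fin (n + 1))))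
    (x : EuclideanSpace ℝ (Fin (n + 1))) (δ r₀ : ℝ) (hδ : 0 < δ) (hr₀ : 0 < r₀)
    (hratio : ∀ s : ℝ, 0 < s → s ≤ r₀ → μ (closedBall x s)
      ≤ ENNReal.ofReal ((1 + δ)
          * (volume (closedBall (0 : EuclideanSpace ℝ (Fin n)) 1)).toReal * s ^ n))
    (C d : ℝ) (hC : 0 < C) (hd : 0 ≤ d)
    (hgrowth : ∀ ρ > 0, μ (closedBall x ρ) ≤ ENNReal.ofReal (C * (1 + ρ) ^ d)) :
    ∀ δ' > 0, ∃ r₁ : ℝ, 0 < r₁ ∧ r₁ < r₀ ∧ ∀ r : ℝ, 0 < r → r ≤ r₁ →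
      ∫⁻ y, ENNReal.ofReal ((4 * Real.pi * r ^ 2) ^ (-(n : ℝ) / 2)
          * Real.exp (-‖y - x‖ ^ 2 / (4 * r ^ 2))) ∂μ
        ≤ ENNReal.ofReal (1 + δ + δ') := by
  intro δ' hδ'
  have hb8 : (0:ℝ) < 8 * r₀^2 := by positivity
  set K := ∫⁻ y, ENNReal.ofReal (Real.exp (-‖y - x‖^2 / (8*r₀^2))) ∂μ with hK_def
  have hKtop : K ≠ ⊤ := growth_lintegral_lt_top n μ x hC hd hb8 hgrowth
  have hn1 : (1:ℝ) ≤ (n:ℝ) := by exact_mod_cast hn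
  set a : ℝ := r₀^2/8 with ha_def
  have ha : 0 < a := by positivity
  have h2na : 0 < 2*(n:ℝ)/a := div_pos (by linarith) ha
  set B : ℝ := (4*Real.pi)^(-(n:ℝ)/2) * (2*(n:ℝ)/a)^n * r₀^n with hB_def
  have hB : 0 < B :=
    mul_pos (mul_pos (Real.rpow_pos_of_pos (by positivity) _) (pow_pos h2na n)) (pow_pos hr₀ n)
  have hKt : (0:ℝ) ≤ K.toReal := ENNReal.toReal_nonneg
  have hden : 0 < B * K.toReal + 1 := by positivity
  set ε : ℝ := δ' / (B * K.toReal + 1) with hε_def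
  have hε : 0 < ε := by positivity
  set L : ℝ := max 1 (Real.log (1/ε)) with hL_def
  have hL : (0:ℝ) < L := lt_of_lt_of_le one_pos (le_max_left _ _)
  set r₁ : ℝ := min (r₀/2) (Real.sqrt (a/(2*L))) with hr₁_def
  have hr₁0 : 0 < r₁ := lt_min (by positivity) (Real.sqrt_pos.2 (by positivity))
  have hr₁r₀ : r₁ < r₀ := lt_of_le_of_lt (min_le_left _ _) (by linarith)
  refine ⟨r₁, hr₁0, hr₁r₀, fun r hr hrr₁ => ?_⟩
  have hrr₀ : r ≤ r₀ := hrr₁.trans hr₁r₀.le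
  set c : ℝ := (4 * Real.pi * r ^ 2) ^ (-(n : ℝ) / 2) with hc_def
  have hc : 0 < c := Real.rpow_pos_of_pos (by positivity) _
  -- the exponential factor at scale r₁ is at most ε
  have hexp_r₁ : Real.exp (-(a/(2*r₁^2))) ≤ ε := by
    have hsq : r₁^2 ≤ a/(2*L) := by
      calc r₁^2 ≤ (Real.sqrt (a/(2*L)))^2 := pow_le_pow_left₀ hr₁0.le (min_le_right _ _) 2
        _ = a/(2*L) := Real.sq_sqrt (by positivity)
    have hLle : L ≤ a/(2*r₁^2) := by
      rw [le_div_iff₀ (by positivity)]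
      calc L * (2*r₁^2) = 2*L * r₁^2 := by ring
        _ ≤ 2*L * (a/(2*L)) := mul_le_mul_of_nonneg_left hsq (by positivity)
        _ = a := by field_simp
    calc Real.exp (-(a/(2*r₁^2))) ≤ Real.exp (-(Real.log (1/ε))) := by
          apply Real.exp_le_exp.2
          have h := le_max_right 1 (Real.log (1/ε))
          rw [← hL_def] at h
          linarith
      _ = ε := by rw [Real.exp_neg, Real.exp_log (by positivity), one_div, inv_inv]
  -- decompose the constant
  have hcr : c = (4*Real.pi)^(-(n:ℝ)/2) * ((r^n)⁻¹) := by
    rw [hc_def, show 4*Real.pi*r^2 = (4*Real.pi)*(r^2) by ring,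
      Real.mul_rpow (by positivity) (by positivity), ← Real.rpow_natCast r 2,
      ← Real.rpow_mul hr.le]
    have h2 : ((2:ℕ):ℝ) * (-(n:ℝ)/2) = -(n:ℝ) := by push_cast; ring
    rw [h2, Real.rpow_neg hr.le, Real.rpow_natCast]
  -- elementary bound on the Gaussian factor
  have hpow : Real.exp (-(a/(2*r^2))) ≤ (2*(n:ℝ)*r^2/a)^n := by
    have hnr : (0:ℝ) < 2*(n:ℝ)*r^2 := by nlinarith
    have h1 : (a/(2*(n:ℝ)*r^2)) ≤ Real.exp (a/(2*(n:ℝ)*r^2)) := by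
      linarith [Real.add_one_le_exp (a/(2*(n:ℝ)*r^2))]
    have h2 : (a/(2*(n:ℝ)*r^2))^n ≤ Real.exp (a/(2*r^2)) := by
      have hsplit : Real.exp (a/(2*r^2)) = (Real.exp (a/(2*(n:ℝ)*r^2)))^n := by
        rw [← Real.exp_nat_mul]
        congr 1
        field_simp
      rw [hsplit]
      exact pow_le_pow_left₀ (by positivity) h1 n
    rw [Real.exp_neg,
      show (2*(n:ℝ)*r^2/a)^n = ((a/(2*(n:ℝ)*r^2))^n)⁻¹ by rw [← inv_pow, inv_div]]
    exact inv_anti₀ (by positivity) h2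
  -- bound on the constant in front of the outside integral
  have hM : c * Real.exp (-(r₀^2/(8*r^2))) ≤ B * ε := by
    have hXa : a/r^2 = r₀^2/(8*r^2) := by rw [ha_def, div_div]
    have hsplit : Real.exp (-(a/r^2)) = Real.exp (-(a/(2*r^2))) * Real.exp (-(a/(2*r^2))) := by
      rw [← Real.exp_add]
      congr 1
      field_simp
      ring
    have hcomb : (r^n)⁻¹ * ((2*(n:ℝ)*r^2/a)^n * Real.exp (-(a/(2*r^2))))
        = (2*(n:ℝ)/a)^n * r^n * Real.exp (-(a/(2*r^2))) := by
      rw [show 2*(n:ℝ)*r^2/a = (2*(n:ℝ)/a) * r^2 by ring, mul_pow, ← pow_mul,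
        show r ^ (2*n) = r^n * r^n by rw [two_mul, pow_add]]
      field_simp
    calc c * Real.exp (-(r₀^2/(8*r^2)))
        = (4*Real.pi)^(-(n:ℝ)/2) * ((r^n)⁻¹ * (Real.exp (-(a/(2*r^2))) * Real.exp (-(a/(2*r^2))))) := by
          rw [hcr, ← hXa, hsplit]; ring
      _ ≤ (4*Real.pi)^(-(n:ℝ)/2) * ((r^n)⁻¹ * ((2*(n:ℝ)*r^2/a)^n * Real.exp (-(a/(2*r^2))))) := by
          gcongr
      _ = (4*Real.pi)^(-(n:ℝ)/2) * ((2*(n:ℝ)/a)^n * r^n * Real.exp (-(a/(2*r^2)))) := by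
          rw [hcomb]
      _ ≤ (4*Real.pi)^(-(n:ℝ)/2) * ((2*(n:ℝ)/a)^n * r₀^n * ε) := by
          have e1 : r^n ≤ r₀^n := pow_le_pow_left₀ hr.le hrr₀ n
          have e2 : Real.exp (-(a/(2*r^2))) ≤ ε := by
            calc Real.exp (-(a/(2*r^2))) ≤ Real.exp (-(a/(2*r₁^2))) := by
                  apply Real.exp_le_exp.2
                  have hrle : a/(2*r₁^2) ≤ a/(2*r^2) := by gcongr
                  linarith
              _ ≤ ε := hexp_r₁
          refine mul_le_mul_of_nonneg_left ?_ (Real.rpow_pos_of_pos (by positivity) _).le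
          exact mul_le_mul (mul_le_mul_of_nonneg_left e1 (pow_nonneg h2na.le n)) e2
            (Real.exp_nonneg _) (by positivity)
      _ = B * ε := by rw [hB_def]; ring
  -- outside bound
  have houtside : ∫⁻ y in (closedBall x r₀)ᶜ,
      ENNReal.ofReal (c * Real.exp (-‖y - x‖ ^ 2 / (4 * r ^ 2))) ∂μ ≤ ENNReal.ofReal δ' := by
    have hpt : ∀ y ∈ (closedBall x r₀)ᶜ,
        ENNReal.ofReal (c * Real.exp (-‖y - x‖ ^ 2 / (4 * r ^ 2)))
          ≤ ENNReal.ofReal (c * Real.exp (-(r₀^2/(8*r^2))))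
            * ENNReal.ofReal (Real.exp (-‖y - x‖^2 / (8*r₀^2))) := by
      intro y hy
      rw [← ENNReal.ofReal_mul (by positivity)]
      apply ENNReal.ofReal_le_ofReal
      have hyd : r₀ ≤ ‖y - x‖ := by
        simp only [Set.mem_compl_iff, mem_closedBall, not_le] at hy
        rw [dist_eq_norm] at hy
        exact hy.le
      have h1 : r₀^2 ≤ ‖y-x‖^2 := pow_le_pow_left₀ hr₀.le hyd 2
      have key : -‖y-x‖^2/(4*r^2) ≤ -(r₀^2/(8*r^2)) + (-‖y-x‖^2 / (8*r₀^2)) := by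
        have e1 : r₀^2/(8*r^2) ≤ ‖y-x‖^2/(8*r^2) := by gcongr
        have e2 : ‖y-x‖^2/(8*r₀^2) ≤ ‖y-x‖^2/(8*r^2) := by gcongr <;> positivity
        have e3 : ‖y-x‖^2/(8*r^2) + ‖y-x‖^2/(8*r^2) = ‖y-x‖^2/(4*r^2) := by
          field_simp
          ring
        have h4 : -‖y-x‖^2/(4*r^2) = -(‖y-x‖^2/(4*r^2)) := by rw [neg_div]
        have h5 : -‖y-x‖^2/(8*r₀^2) = -(‖y-x‖^2/(8*r₀^2)) := by rw [neg_div]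
        rw [h4, h5]
        linarith
      calc c * Real.exp (-‖y - x‖ ^ 2 / (4 * r ^ 2))
          ≤ c * (Real.exp (-(r₀^2/(8*r^2))) * Real.exp (-‖y - x‖^2 / (8*r₀^2))) := by
            rw [← Real.exp_add]
            exact mul_le_mul_of_nonneg_left (Real.exp_le_exp.2 key) hc.le
        _ = c * Real.exp (-(r₀^2/(8*r^2))) * Real.exp (-‖y - x‖^2 / (8*r₀^2)) := by ring
    calc ∫⁻ y in (closedBall x r₀)ᶜ,
          ENNReal.ofReal (c * Real.exp (-‖y - x‖ ^ 2 / (4 * r ^ 2))) ∂μ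
        ≤ ∫⁻ y in (closedBall x r₀)ᶜ, ENNReal.ofReal (c * Real.exp (-(r₀^2/(8*r^2))))
            * ENNReal.ofReal (Real.exp (-‖y - x‖^2 / (8*r₀^2))) ∂μ :=
          setLIntegral_mono' measurableSet_closedBall.compl hpt
      _ ≤ ∫⁻ y, ENNReal.ofReal (c * Real.exp (-(r₀^2/(8*r^2))))
            * ENNReal.ofReal (Real.exp (-‖y - x‖^2 / (8*r₀^2))) ∂μ :=
          lintegral_mono' Measure.restrict_le_self le_rfl
      _ = ENNReal.ofReal (c * Real.exp (-(r₀^2/(8*r^2)))) * K :=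
          lintegral_const_mul' _ _ ENNReal.ofReal_ne_top
      _ ≤ ENNReal.ofReal (B * ε) * K := mul_le_mul_left (ENNReal.ofReal_le_ofReal hM) _
      _ ≤ ENNReal.ofReal δ' := by
          rw [← ENNReal.ofReal_toReal hKtop, ← ENNReal.ofReal_mul (by positivity)]
          apply ENNReal.ofReal_le_ofReal
          calc B * ε * K.toReal = ε * (B * K.toReal) := by ring
            _ ≤ ε * (B * K.toReal + 1) := mul_le_mul_of_nonneg_left (by linarith) hε.le
            _ = δ' := by rw [hε_def]; field_simp
  have hinside := inside_bound n μ x δ r₀ hδ hr₀ hratio hr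
  rw [← lintegral_add_compl (μ := μ)
    (fun y => ENNReal.ofReal (c * Real.exp (-‖y - x‖ ^ 2 / (4 * r ^ 2))))
    (measurableSet_closedBall : MeasurableSet (closedBall x r₀))]
  calc (∫⁻ y in closedBall x r₀,
        ENNReal.ofReal (c * Real.exp (-‖y - x‖ ^ 2 / (4 * r ^ 2))) ∂μ)
      + ∫⁻ y in (closedBall x r₀)ᶜ,
        ENNReal.ofReal (c * Real.exp (-‖y - x‖ ^ 2 / (4 * r ^ 2))) ∂μ
      ≤ ENNReal.ofReal (1 + δ) + ENNReal.ofReal δ' := add_le_add hinside houtside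
    _ = ENNReal.ofReal (1 + δ + δ') := (ENNReal.ofReal_add (by positivity) hδ'.le).symm
end
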